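/- arXiv:2011.10820 — 4 statements merged into one kernel-verified Lean document; each statement's English description precedes it below -/
import Mathlib

section
/- Splitting the cycles: Let α be a finite type with decidable equality and let A be a subset of α. Let U be the set of permutations τ of α such that any two elements of A lying in the same cycle of τ coincide (i.e. for all a, b ∈ A, if τ.SameCycle a b then a = b), and let S_A be the set of permutations of α fixing every point outside A. Then the multiplication map U × S_A → Perm α sending (τ, σ) to τ * σ (composition, τ after σ) is a bijection. -/
/-!
For `π = τ * σ` with `σ` fixing every point outside `A` and each cycle of `τ` meeting `A` at most
once, `σ` is the first-return map of `π` to `A`: starting from `a ∈ A`, the `π`-orbit of `a`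
follows the `τ`-orbit of `σ a` until it re-enters `A`, which happens exactly when the `τ`-orbit
closes up at `σ a`. Hence `σ` is determined by `π`. Conversely, taking for `σ` the first-return
map of an arbitrary `π`, the same bookkeeping applied to `π * σ⁻¹` shows that its cycle through
`a ∈ A` comes back to `a` before meeting any other point of `A`.
-/

namespace Equiv.Perm

variable {α : Type*} {A : Set α} {π ρ σ τ : Perm α} {a b x y : α} {k l : ℕ}

def IsFirstReturnTime (π : Perm α) (A : Set α) (a : α) (k : ℕ) : Prop :=
  0 < k ∧ (π ^ k) a ∈ A ∧ ∀ j, 0 < j → j < k → (π ^ j) a ∉ A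

theorem IsFirstReturnTime.unique (hk : π.IsFirstReturnTime A a k)
    (hl : π.IsFirstReturnTime A a l) : k = l := by
  by_contra hne
  rcases Nat.lt_or_gt_of_ne hne with h | h
  · exact hl.2.2 k hk.1 h hk.2.1
  · exact hk.2.2 l hl.1 h hl.2.1

theorem exists_isFirstReturnTime [Finite α] (π : Perm α) (ha : a ∈ A) :
    ∃ k, π.IsFirstReturnTime A a k := by
  classical
  have h : ∃ k, 0 < k ∧ (π ^ k) a ∈ A :=
    ⟨orderOf π, orderOf_pos π, by simpa [pow_orderOf_eq_one] using ha⟩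
  exact ⟨Nat.find h, (Nat.find_spec h).1, (Nat.find_spec h).2,
    fun j hj hjk hjA => Nat.find_min h hjk ⟨hj, hjA⟩⟩

theorem IsFirstReturnTime.eq_of_pow_apply_eq (hx : x ∈ A) (hy : y ∈ A)
    (hk : π.IsFirstReturnTime A x k) (hl : π.IsFirstReturnTime A y l)
    (h : (π ^ k) x = (π ^ l) y) : x = y := by
  wlog hkl : k ≤ l generalizing x y k l
  · exact (this hy hx hl hk h.symm (le_of_not_ge hkl)).symm
  have hx' : x = (π ^ (l - k)) y := by
    apply (π ^ k).injective
    rw [h, ← mul_apply, ← pow_add, Nat.add_sub_cancel' hkl]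
  rcases Nat.eq_zero_or_pos (l - k) with h0 | h0
  · simpa [h0] using hx'
  · exact absurd (hx' ▸ hx) (hl.2.2 (l - k) h0 (by have := hk.1; omega))

theorem apply_mem_iff_of_forall_notMem (hσ : ∀ x ∉ A, σ x = x) : σ x ∈ A ↔ x ∈ A := by
  refine ⟨fun h => ?_, fun h => ?_⟩
  · by_contra hx
    exact hx (hσ x hx ▸ h)
  · by_contra hσx
    rw [σ.injective (hσ _ hσx)] at hσx
    exact hσx h

theorem mul_pow_apply_of_forall_pow_apply_notMem (hσ : ∀ x ∉ A, σ x = x) {j : ℕ} (hj : 0 < j)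
    (h : ∀ i, 0 < i → i < j → (ρ ^ i) (σ x) ∉ A) : ((ρ * σ) ^ j) x = (ρ ^ j) (σ x) := by
  induction j, hj using Nat.le_induction with
  | base => simp
  | succ n hn ih =>
    rw [pow_succ', mul_apply, ih fun i hi hin => h i hi (by omega), mul_apply,
      hσ _ (h n hn n.lt_succ_self), ← mul_apply, ← pow_succ']

theorem IsFirstReturnTime.mul (hσ : ∀ x ∉ A, σ x = x) (h : ρ.IsFirstReturnTime A (σ x) k) :
    (ρ * σ).IsFirstReturnTime A x k ∧ ((ρ * σ) ^ k) x = (ρ ^ k) (σ x) := by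
  have agree : ∀ j, 0 < j → j ≤ k → ((ρ * σ) ^ j) x = (ρ ^ j) (σ x) := fun j hj hjk =>
    mul_pow_apply_of_forall_pow_apply_notMem hσ hj fun i hi hij => h.2.2 i hi (by omega)
  refine ⟨⟨h.1, ?_, fun j hj hjk => ?_⟩, agree k h.1 le_rfl⟩
  · exact agree k h.1 le_rfl ▸ h.2.1
  · exact agree j hj hjk.le ▸ h.2.2 j hj hjk

theorem IsFirstReturnTime.eq_of_sameCycle [Finite α] (h : τ.IsFirstReturnTime A a k)
    (hper : (τ ^ k) a = a) (hb : b ∈ A) (hab : τ.SameCycle a b) : b = a := by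
  obtain ⟨n, -, rfl⟩ := hab.exists_pow_eq'
  have hperiodic : Function.IsPeriodicPt τ k a := by
    rw [Function.IsPeriodicPt, Function.IsFixedPt, ← coe_pow]
    exact hper
  have hmod : (τ ^ n) a = (τ ^ (n % k)) a := by
    rw [coe_pow, coe_pow, hperiodic.iterate_mod_apply]
  rcases Nat.eq_zero_or_pos (n % k) with h0 | h0
  · rw [hmod, h0, pow_zero, one_apply]
  · exact absurd (hmod ▸ hb) (h.2.2 _ h0 (Nat.mod_lt n h.1))

section FirstReturn

variable [Finite α]

-- Junk value `0` off `A`, so that `firstReturn` fixes every point outside `A`.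
open Classical in
noncomputable def firstReturnTime (π : Perm α) (A : Set α) (a : α) : ℕ :=
  if ha : a ∈ A then (π.exists_isFirstReturnTime ha).choose else 0

theorem isFirstReturnTime_firstReturnTime (ha : a ∈ A) :
    π.IsFirstReturnTime A a (π.firstReturnTime A a) := by
  rw [firstReturnTime, dif_pos ha]
  exact (π.exists_isFirstReturnTime ha).choose_spec

theorem firstReturnTime_of_notMem (ha : a ∉ A) : π.firstReturnTime A a = 0 := dif_neg ha

theorem injective_pow_firstReturnTime_apply :
    Function.Injective fun a => (π ^ π.firstReturnTime A a) a := by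
  have outside : ∀ {y}, y ∉ A → (π ^ π.firstReturnTime A y) y = y := fun hy => by
    rw [firstReturnTime_of_notMem hy, pow_zero, one_apply]
  intro x y hxy
  simp only at hxy
  by_cases hx : x ∈ A <;> by_cases hy : y ∈ A
  · exact (isFirstReturnTime_firstReturnTime hx).eq_of_pow_apply_eq hx hy
      (isFirstReturnTime_firstReturnTime hy) hxy
  · exact absurd (outside hy ▸ hxy ▸ (isFirstReturnTime_firstReturnTime hx).2.1) hy
  · exact absurd (outside hx ▸ hxy.symm ▸ (isFirstReturnTime_firstReturnTime hy).2.1) hx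
  · rwa [outside hx, outside hy] at hxy

noncomputable def firstReturn (π : Perm α) (A : Set α) : Perm α :=
  Equiv.ofBijective _ (Finite.injective_iff_bijective.mp (injective_pow_firstReturnTime_apply
    (π := π) (A := A)))

theorem firstReturn_apply : π.firstReturn A a = (π ^ π.firstReturnTime A a) a := rfl

theorem firstReturn_apply_of_notMem (ha : a ∉ A) : π.firstReturn A a = a := by
  rw [firstReturn_apply, firstReturnTime_of_notMem ha, pow_zero, one_apply]

theorem IsFirstReturnTime.firstReturn_apply (ha : a ∈ A) (h : π.IsFirstReturnTime A a k) :
    π.firstReturn A a = (π ^ k) a := by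
  rw [Perm.firstReturn_apply, (isFirstReturnTime_firstReturnTime ha).unique h]

theorem firstReturn_mul (hτ : ∀ a ∈ A, ∀ b ∈ A, τ.SameCycle a b → a = b)
    (hσ : ∀ x ∉ A, σ x = x) : (τ * σ).firstReturn A = σ := by
  ext a
  by_cases ha : a ∈ A
  · have hσa : σ a ∈ A := (apply_mem_iff_of_forall_notMem hσ).mpr ha
    obtain ⟨k, hk⟩ := τ.exists_isFirstReturnTime hσa
    have hper : (τ ^ k) (σ a) = σ a :=
      (hτ _ hσa _ hk.2.1 ⟨k, by rw [zpow_natCast]⟩).symm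
    obtain ⟨hfr, hval⟩ := hk.mul hσ
    rw [hfr.firstReturn_apply ha, hval, hper]
  · rw [firstReturn_apply_of_notMem ha, hσ a ha]

theorem sameCycle_mul_inv_firstReturn (ha : a ∈ A) (hb : b ∈ A)
    (h : (π * (π.firstReturn A)⁻¹).SameCycle a b) : a = b := by
  set σ := π.firstReturn A
  have hσ : ∀ x ∉ A, σ⁻¹ x = x := fun x hx =>
    inv_eq_iff_eq.mpr (firstReturn_apply_of_notMem hx).symm
  have hc : σ⁻¹ a ∈ A := (apply_mem_iff_of_forall_notMem hσ).mpr ha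
  have hk := isFirstReturnTime_firstReturnTime (π := π) hc
  have hca : (π ^ π.firstReturnTime A (σ⁻¹ a)) (σ⁻¹ a) = a := by
    rw [← firstReturn_apply]
    exact σ.apply_symm_apply a
  obtain ⟨hfr, hval⟩ := hk.mul hσ
  exact (hfr.eq_of_sameCycle (hval.trans hca) hb h).symm

end FirstReturn

end Equiv.Perm

open Equiv.Perm

theorem splitting_the_cycles_general {α : Type*} [Fintype α] (A : Set α) :
    Function.Bijective
      (fun p : {τ : Equiv.Perm α // ∀ a ∈ A, ∀ b ∈ A, τ.SameCycle a b → a = b} ×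
               {σ : Equiv.Perm α // ∀ x, x ∉ A → σ x = x} =>
        (p.1 : Equiv.Perm α) * (p.2 : Equiv.Perm α)) := by
  refine Function.bijective_iff_has_inverse.mpr
    ⟨fun π => (⟨π * (π.firstReturn A)⁻¹, fun _ ha _ hb => sameCycle_mul_inv_firstReturn ha hb⟩,
      ⟨π.firstReturn A, fun _ => firstReturn_apply_of_notMem⟩), ?_,
      fun π => inv_mul_cancel_right π _⟩
  rintro ⟨⟨τ, hτ⟩, ⟨σ, hσ⟩⟩
  simp only [firstReturn_mul hτ hσ, mul_inv_cancel_right]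

/-- **Splitting the cycles.**  Let `A` be a subset of a finite type `α`.  Let `U` be the set of
permutations `τ` of `α` each of whose cycles contains at most one element of `A` (i.e. any two
elements of `A` in the same cycle of `τ` coincide), and let `S_A` be the set of permutations
fixing every point outside `A`.  Then the multiplication map `U × S_A → Perm α`,
`(τ, σ) ↦ τ * σ`, is a bijection. -/
theorem splitting_the_cycles {α : Type*} [Fintype α] [DecidableEq α] (A : Set α) :
    Function.Bijective
      (fun p : {τ : Equiv.Perm α // ∀ a ∈ A, ∀ b ∈ A, τ.SameCycle a b → a = b} ×
               {σ : Equiv.Perm α // ∀ x, x ∉ A → σ x = x} =>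
        (p.1 : Equiv.Perm α) * (p.2 : Equiv.Perm α)) :=
  splitting_the_cycles_general A
end

section
/- Commutant theorem (Schur–Weyl, FFT form): Let d, h ≥ 1 and let M ∈ Matrix (Fin h → Fin d) (Fin h → Fin d) ℚ. If M commutes with the h-fold Kronecker power K(fun _ => g) for every invertible matrix g : Matrix (Fin d) (Fin d) ℚ (i.e. M * K(fun _ => g) = K(fun _ => g) * M for all g in the general linear group), then M lies in the ℚ-linear span of the permutation operators P_σ, σ ∈ Equiv.Perm (Fin h). -/
/-- The permutation operator `P_σ` on the `m`-th tensor power of the `d`-dimensional space,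
realized as a matrix indexed by functions `Fin m → Fin d`. -/
def permMat (d m : ℕ) (R : Type*) [CommRing R] (σ : Equiv.Perm (Fin m)) :
    Matrix (Fin m → Fin d) (Fin m → Fin d) R :=
  Matrix.of fun f g => if g = f ∘ σ then 1 else 0

/-- The Kronecker product `K(x) = x 0 ⊗ x 1 ⊗ ⋯ ⊗ x (m-1)` of a family of `d × d` matrices. -/
def kron (d m : ℕ) (R : Type*) [CommRing R]
    (x : Fin m → Matrix (Fin d) (Fin d) R) :
    Matrix (Fin m → Fin d) (Fin m → Fin d) R :=
  Matrix.of fun f g => ∏ i, x i (f i) (g i)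


/-!
Writing `A + t` for `A + t • 1`, the commutator of `M` with `K(fun _ => A + t)` is a polynomial in
`t` that vanishes off the finitely many roots of `charpoly (-A)`, so `M` commutes with every
Kronecker power `K(fun _ => A)`. Ryser's inclusion–exclusion formula for the permanent writes each
symmetrised product `∑ σ, K(x ∘ σ)` as a combination of Kronecker powers, and averaging a matrix
unit over conjugation by the `P_σ` produces such a product; hence `M` commutes with every matrix
commuting with all `P_σ`. The permutation representation is semisimple by Maschke, so the Jacobson
density theorem puts `M` in the span of the `P_σ`.
-/

open Module Matrix Polynomial Finset

section Representation

variable {K G V : Type*} [Field K] [Group G] [AddCommGroup V] [Module K V]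

theorem Representation.asAlgebraHom_mem_span_range (ρ : Representation K G V)
    (r : MonoidAlgebra K G) : ρ.asAlgebraHom r ∈ Submodule.span K (Set.range ρ) := by
  rw [Representation.asAlgebraHom_def, MonoidAlgebra.lift_apply]
  exact Submodule.finsuppSum_mem _ _ _ _ fun g _ =>
    Submodule.smul_mem _ _ (Submodule.subset_span ⟨g, rfl⟩)

theorem Representation.commute_asModuleEquiv_conj (ρ : Representation K G V)
    (ψ : End (MonoidAlgebra K G) ρ.asModule) (g : G) :
    Commute (ρ g) (ρ.asModuleEquiv.conj (ψ.restrictScalars K)) := LinearMap.ext fun v => by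
  change ρ g (ρ.asModuleEquiv (ψ (ρ.asModuleEquiv.symm v))) =
    ρ.asModuleEquiv (ψ (ρ.asModuleEquiv.symm (ρ g v)))
  rw [ρ.asModuleEquiv_symm_map_rho, map_smul, ρ.asModuleEquiv_map_smul, ρ.asAlgebraHom_of]

theorem Representation.mem_span_range_of_forall_commute [Finite G] [NeZero (Nat.card G : K)]
    [Module.Finite K V] (ρ : Representation K G V) (f : End K V)
    (hf : ∀ ψ : End K V, (∀ g, Commute (ρ g) ψ) → Commute f ψ) :
    f ∈ Submodule.span K (Set.range ρ) := by
  let e := ρ.asModuleEquiv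
  let F : End (End (MonoidAlgebra K G) ρ.asModule) ρ.asModule :=
    { toFun w := e.symm (f (e w))
      map_add' := by simp
      map_smul' ψ w := by
        have h := LinearMap.congr_fun (hf _ (ρ.commute_asModuleEquiv_conj ψ)) (e w)
        change f (e (ψ (e.symm (e w)))) = e (ψ (e.symm (f (e w)))) at h
        rw [e.symm_apply_apply] at h
        change e.symm (f (e (ψ w))) = ψ (e.symm (f (e w)))
        rw [h, e.symm_apply_apply] }
  have : Module.Finite (End (MonoidAlgebra K G) ρ.asModule) ρ.asModule :=
    .of_restrictScalars_finite K _ _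
  -- By Maschke `ρ.asModule` is semisimple, so Jacobson density realises `F` by some `r : K[G]`.
  obtain ⟨r, hr⟩ := Module.Finite.toModuleEnd_moduleEnd_surjective F
  convert ρ.asAlgebraHom_mem_span_range r
  ext v
  have h := congr_arg e (LinearMap.congr_fun hr (e.symm v))
  change ρ.asAlgebraHom r (e (e.symm v)) = e (e.symm (f (e (e.symm v)))) at h
  simpa only [e.apply_symm_apply] using h.symm

end Representation

section Ryser

variable {n R : Type*} [Fintype n] [DecidableEq n] [CommRing R]

theorem Fintype.sum_ite_surjective_eq_sum_perm {M : Type*} [AddCommMonoid M]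
    (F : (n → n) → M) :
    ∑ ψ : n → n, (if Function.Surjective ψ then F ψ else 0) = ∑ σ : Equiv.Perm n, F σ := by
  rw [← Finset.sum_filter]
  refine Finset.sum_bij' (fun ψ hψ => Equiv.ofBijective ψ ?_) (fun σ _ => ⇑σ)
    (fun _ _ => mem_univ _) (fun σ _ => by simpa using σ.surjective) (fun _ _ => rfl)
    (fun _ _ => Equiv.ext fun _ => rfl) (fun _ _ => rfl)
  exact Finite.surjective_iff_bijective.mp (by simpa using hψ)

theorem Finset.sum_ite_subset_neg_one_pow_card_compl (T : Finset n) :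
    ∑ S : Finset n, (if T ⊆ S then (-1 : R) ^ #Sᶜ else 0) = if T = univ then 1 else 0 := by
  have h := congr_arg (Int.cast : ℤ → R) (sum_powerset_neg_one_pow_card (x := Tᶜ))
  push_cast at h
  simp_rw [compl_eq_empty_iff] at h
  rw [← h]
  calc ∑ S : Finset n, (if T ⊆ S then (-1 : R) ^ #Sᶜ else 0)
      = ∑ U : Finset n, (if U ⊆ Tᶜ then (-1 : R) ^ #U else 0) :=
        Fintype.sum_bijective (·ᶜ) compl_involutive.bijective _ _ fun S => by simp
    _ = ∑ U ∈ Tᶜ.powerset, (-1 : R) ^ #U := by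
        rw [← sum_filter]
        congr 1
        ext U
        simp

theorem Matrix.permanent_eq_sum_powerset (b : Matrix n n R) :
    b.permanent = ∑ S : Finset n, (-1) ^ #Sᶜ * ∏ i, ∑ k ∈ S, b k i := by
  have hprod (S : Finset n) : ∏ i, ∑ k ∈ S, b k i =
      ∑ ψ : n → n, if univ.image ψ ⊆ S then ∏ i, b (ψ i) i else 0 := by
    rw [prod_univ_sum (fun _ => S) fun i k => b k i, ← sum_filter]
    congr 1
    ext ψ
    simp [image_subset_iff]
  have hsurj (ψ : n → n) : univ.image ψ = univ ↔ Function.Surjective ψ := by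
    simp [eq_univ_iff_forall, Function.Surjective]
  calc b.permanent
        = ∑ ψ : n → n, if Function.Surjective ψ then ∏ i, b (ψ i) i else 0 :=
        (Fintype.sum_ite_surjective_eq_sum_perm fun ψ => ∏ i, b (ψ i) i).symm
    _ = ∑ ψ : n → n, (∑ S : Finset n, if univ.image ψ ⊆ S then (-1 : R) ^ #Sᶜ else 0) *
          ∏ i, b (ψ i) i := by
        simp_rw [sum_ite_subset_neg_one_pow_card_compl, hsurj, ite_mul, one_mul, zero_mul]
    _ = _ := by
        simp_rw [hprod, mul_sum, sum_mul, mul_ite, mul_zero, ite_mul, zero_mul]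
        exact sum_comm

end Ryser

theorem Matrix.eq_zero_of_infinite_setOf_map_eval_eq_zero {ι κ R : Type*} [CommRing R]
    [IsDomain R] (P : Matrix ι κ R[X]) (h : {t : R | P.map (eval t) = 0}.Infinite) : P = 0 := by
  refine Matrix.ext fun i j => eq_zero_of_infinite_isRoot _ ?_
  exact h.mono fun t (ht : P.map (eval t) = 0) => congr_fun₂ ht i j

section PermMatKron

variable {d m : ℕ} {R : Type*} [CommRing R]

theorem permMat_mul_apply (σ : Equiv.Perm (Fin m))
    (A : Matrix (Fin m → Fin d) (Fin m → Fin d) R) (f g : Fin m → Fin d) :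
    (permMat d m R σ * A) f g = A (f ∘ σ) g := by
  simp [permMat, Matrix.mul_apply]

theorem mul_permMat_apply (A : Matrix (Fin m → Fin d) (Fin m → Fin d) R)
    (σ : Equiv.Perm (Fin m)) (f g : Fin m → Fin d) :
    (A * permMat d m R σ) f g = A f (g ∘ ⇑σ⁻¹) := by
  simp [permMat, Matrix.mul_apply, eq_comm (a := g), ← Equiv.eq_comp_symm, Equiv.Perm.inv_def]

theorem permMat_mul (σ τ : Equiv.Perm (Fin m)) :
    permMat d m R σ * permMat d m R τ = permMat d m R (σ * τ) := by
  ext f g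
  rw [permMat_mul_apply]
  rfl

theorem permMat_one : permMat d m R 1 = 1 := by
  ext f g
  simp [permMat, Matrix.one_apply, eq_comm]

def permRep (d m : ℕ) (R : Type*) [CommRing R] :
    Representation R (Equiv.Perm (Fin m)) ((Fin m → Fin d) → R) where
  toFun σ := toLinAlgEquiv' (permMat d m R σ)
  map_one' := by rw [permMat_one, map_one]
  map_mul' σ τ := by rw [← permMat_mul, map_mul]

theorem permRep_apply (σ : Equiv.Perm (Fin m)) :
    permRep d m R σ = toLinAlgEquiv' (permMat d m R σ) := rfl

theorem permMat_inv_mul_kron_mul_permMat (σ : Equiv.Perm (Fin m))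
    (x : Fin m → Matrix (Fin d) (Fin d) R) :
    permMat d m R σ⁻¹ * kron d m R x * permMat d m R σ = kron d m R (x ∘ ⇑σ) := by
  ext f g
  rw [mul_permMat_apply, permMat_mul_apply]
  simpa [kron] using (Equiv.prod_comp σ fun i => x i (f (σ⁻¹ i)) (g (σ⁻¹ i))).symm

theorem kron_single_one (a b : Fin m → Fin d) :
    kron d m R (fun i => single (a i) (b i) 1) = single a b 1 := by
  ext f g
  simp [kron, single_apply, prod_boole, funext_iff, forall_and]

theorem sum_kron_comp_perm (x : Fin m → Matrix (Fin d) (Fin d) R) :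
    ∑ σ : Equiv.Perm (Fin m), kron d m R (x ∘ ⇑σ) =
      ∑ S : Finset (Fin m), (-1 : R) ^ #Sᶜ • kron d m R (fun _ => ∑ k ∈ S, x k) := by
  ext f g
  simpa [kron, Matrix.sum_apply, permanent] using
    (of fun k i => x k (f i) (g i)).permanent_eq_sum_powerset

theorem kron_map {S : Type*} [CommRing S] (φ : R →+* S)
    (x : Fin m → Matrix (Fin d) (Fin d) R) :
    (kron d m R x).map φ = kron d m S (fun i => (x i).map φ) := by
  ext f g
  simp [kron]

theorem commute_sum_kron_comp_perm {M : Matrix (Fin m → Fin d) (Fin m → Fin d) R}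
    (hM : ∀ A, Commute M (kron d m R fun _ => A)) (x : Fin m → Matrix (Fin d) (Fin d) R) :
    Commute M (∑ σ : Equiv.Perm (Fin m), kron d m R (x ∘ ⇑σ)) := by
  rw [sum_kron_comp_perm]
  exact Commute.sum_right _ _ _ fun S _ => (hM _).smul_right _

end PermMatKron

section Commutant

variable {d m : ℕ} {K : Type*} [Field K]

theorem commute_kron_const_of_forall_isUnit [Infinite K]
    {M : Matrix (Fin m → Fin d) (Fin m → Fin d) K}
    (hM : ∀ g, IsUnit g → Commute M (kron d m K fun _ => g)) (A : Matrix (Fin d) (Fin d) K) :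
    Commute M (kron d m K fun _ => A) := by
  let N : Matrix (Fin d) (Fin d) K[X] := charmatrix (-A)
  let P := M.map C * kron d m K[X] (fun _ => N) - kron d m K[X] (fun _ => N) * M.map C
  have hN (t : K) : N.map (evalRingHom t) = scalar (Fin d) t + A := by
    ext i j
    obtain rfl | hij := eq_or_ne i j <;> simp [N, *]
  have hP (t : K) : (evalRingHom t).mapMatrix P =
      M * kron d m K (fun _ => scalar (Fin d) t + A) -
        kron d m K (fun _ => scalar (Fin d) t + A) * M := by
    have hC : (evalRingHom t).mapMatrix (M.map C) = M := by ext; simp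
    simp only [P, map_sub, map_mul, hC, RingHom.mapMatrix_apply, kron_map, hN]
  have hroots : {t : K | ¬IsUnit (scalar (Fin d) t + A)} ⊆ {t | IsRoot (charpoly (-A)) t} := by
    intro t ht
    simpa [isUnit_iff_isUnit_det, IsRoot, eval_charpoly, sub_eq_add_neg] using ht
  have hP0 : P = 0 := by
    refine P.eq_zero_of_infinite_setOf_map_eval_eq_zero (Set.Infinite.mono ?_
      ((finite_setOfPred_isRoot (charpoly_monic (-A)).ne_zero).subset hroots).infinite_compl)
    intro t ht
    simp only [Set.mem_compl_iff, Set.mem_ofPred_eq, not_not] at ht ⊢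
    rw [← coe_evalRingHom, ← RingHom.mapMatrix_apply, hP, (hM _ ht).eq, sub_self]
  have h0 := hP 0
  rw [hP0, map_zero, map_zero, zero_add, eq_comm, sub_eq_zero] at h0
  exact h0

theorem mem_span_permMat_of_forall_commute [NeZero (m.factorial : K)]
    (M : Matrix (Fin m → Fin d) (Fin m → Fin d) K)
    (hM : ∀ X, (∀ σ, Commute (permMat d m K σ) X) → Commute M X) :
    M ∈ Submodule.span K (Set.range (permMat d m K)) := by
  have : NeZero (Nat.card (Equiv.Perm (Fin m)) : K) := by
    rwa [Nat.card_perm, Nat.card_fin]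
  let e : Matrix (Fin m → Fin d) (Fin m → Fin d) K ≃ₐ[K] End K ((Fin m → Fin d) → K) :=
    toLinAlgEquiv'
  have h := Representation.mem_span_range_of_forall_commute (permRep d m K) (e M) fun ψ hψ => by
    have hX (σ : Equiv.Perm (Fin m)) : Commute (permMat d m K σ) (e.symm ψ) := by
      simpa [e, permRep_apply] using (hψ σ).map e.symm
    simpa [e] using (hM _ hX).map e
  have hcomp : e.symm ∘ permRep d m K = permMat d m K :=
    funext fun σ => by simp [e, permRep_apply]
  simpa [← Set.range_comp, hcomp] using
    Submodule.apply_mem_span_image_of_mem_span e.symm.toLinearMap h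

theorem commute_of_forall_commute_permMat [NeZero (m.factorial : K)]
    {M : Matrix (Fin m → Fin d) (Fin m → Fin d) K}
    (hM : ∀ A, Commute M (kron d m K fun _ => A))
    {X : Matrix (Fin m → Fin d) (Fin m → Fin d) K} (hX : ∀ σ, Commute (permMat d m K σ) X) :
    Commute M X := by
  have hsym (Y : Matrix (Fin m → Fin d) (Fin m → Fin d) K) :
      Commute M (∑ σ, permMat d m K σ⁻¹ * Y * permMat d m K σ) := by
    induction Y using Matrix.induction_on' with
    | h_zero => simp
    | h_add Y Z hY hZ => simpa [mul_add, add_mul, sum_add_distrib] using hY.add_right hZ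
    | h_std_basis a b c =>
      have hc : single a b c = c • kron d m K (fun i => single (a i) (b i) 1) := by
        rw [kron_single_one, smul_single, smul_eq_mul, mul_one]
      simp_rw [hc, mul_smul_comm, smul_mul_assoc, permMat_inv_mul_kron_mul_permMat, ← smul_sum]
      exact (commute_sum_kron_comp_perm hM _).smul_right c
  have havg : ∑ σ, permMat d m K σ⁻¹ * X * permMat d m K σ = (m.factorial : K) • X := by
    simp [(hX _).eq, mul_assoc, permMat_mul, permMat_one, Nat.cast_smul_eq_nsmul, nsmul_eq_mul,
      Fintype.card_perm]
  simpa [havg, Commute.smul_right_iff₀ (NeZero.ne (m.factorial : K))] using hsym X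

end Commutant

theorem commutant_of_GL_is_span_of_permutations_general (d h : ℕ)
    (M : Matrix (Fin h → Fin d) (Fin h → Fin d) ℚ)
    (hM : ∀ g : Matrix (Fin d) (Fin d) ℚ, IsUnit g →
      M * kron d h ℚ (fun _ => g) = kron d h ℚ (fun _ => g) * M) :
    M ∈ Submodule.span ℚ (Set.range (fun σ : Equiv.Perm (Fin h) => permMat d h ℚ σ)) := by
  have : NeZero (h.factorial : ℚ) := ⟨Nat.cast_ne_zero.mpr h.factorial_ne_zero⟩
  exact mem_span_permMat_of_forall_commute M fun _ hX =>
    commute_of_forall_commute_permMat (commute_kron_const_of_forall_isUnit hM) hX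

/-- **Commutant theorem (Schur–Weyl, FFT form).**  A matrix acting on the `h`-th tensor power of
`ℚ^d` which commutes with the `h`-fold Kronecker power of every invertible `d × d` matrix lies in
the linear span of the permutation operators. -/
theorem commutant_of_GL_is_span_of_permutations (d h : ℕ) (hd : 1 ≤ d) (hh : 1 ≤ h)
    (M : Matrix (Fin h → Fin d) (Fin h → Fin d) ℚ)
    (hM : ∀ g : Matrix (Fin d) (Fin d) ℚ, IsUnit g →
      M * kron d h ℚ (fun _ => g) = kron d h ℚ (fun _ => g) * M) :
    M ∈ Submodule.span ℚ (Set.range (fun σ : Equiv.Perm (Fin h) => permMat d h ℚ σ)) :=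
  commutant_of_GL_is_span_of_permutations_general d h M hM
end

section
/- The identity 𝔠_{1,3}(x) = 0 for 3×3 matrices: Let F be a field of characteristic zero and x : Matrix (Fin 3) (Fin 3) F. Then (∑_{τ ∈ Perm (Fin 3)} sgn(τ) • P_τ) * (K(![x, 1, 1]) + K(![1, x, 1]) + K(![1, 1, x]) − Matrix.trace x • 1) = 0 in Matrix (Fin 3 → Fin 3) (Fin 3 → Fin 3) F, where 1 denotes the identity matrix of the appropriate size and K(![x,1,1]) = x ⊗ 1 ⊗ 1, etc. -/
/-!
Entry `(f, g)` of `(∑_τ sgn(τ) P_τ) K(y)` is the determinant of the `n × n` matrix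
`(y i (f a) (g i))_{a,i}`. For `y = 1` this is `Δ = 1.submatrix f g`, and putting `x` in slot `k`
replaces column `k` of `Δ` by column `k` of `X = x.submatrix f g`; by Cramer's rule these `n`
determinants add up to `tr (adj Δ * X)`. Since `Δ = P Q` and `X = P x Q` for the selection
matrices `P = 1.submatrix f id`, `Q = 1.submatrix id g`, this trace is `det Δ * tr x`, which
cancels the trace term.
-/

open Matrix Equiv

section Trace

variable {n R : Type*} [Fintype n] [DecidableEq n] [CommRing R]

theorem trace_adjugate_mul_mul_mul (P Q x : Matrix n n R) :
    trace (adjugate (P * Q) * (P * x * Q)) = det (P * Q) * trace x := by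
  calc trace (adjugate (P * Q) * (P * x * Q))
      = trace (adjugate Q * (adjugate P * P * x) * Q) := by
        simp only [adjugate_mul_distrib, Matrix.mul_assoc]
    _ = trace (Q * adjugate Q * (det P • x)) := by
        rw [trace_mul_comm, adjugate_mul, smul_mul, Matrix.one_mul, Matrix.mul_assoc]
    _ = det (P * Q) * trace x := by
        rw [mul_adjugate, smul_mul, Matrix.one_mul, trace_smul, trace_smul, det_mul,
          smul_eq_mul, smul_eq_mul]
        ring

theorem trace_adjugate_one_submatrix_mul_submatrix (x : Matrix n n R) (f g : n → n) :
    trace (adjugate ((1 : Matrix n n R).submatrix f g) * x.submatrix f g)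
      = det ((1 : Matrix n n R).submatrix f g) * trace x := by
  have hsub : ∀ y : Matrix n n R,
      y.submatrix f g = (1 : Matrix n n R).submatrix f id * y * (1 : Matrix n n R).submatrix id g :=
    fun y => by
      rw [← Equiv.coe_refl, one_submatrix_mul, mul_submatrix_one]
      rfl
  rw [hsub x, hsub 1, Matrix.mul_one]
  exact trace_adjugate_mul_mul_mul _ _ x

theorem sum_det_updateCol_eq_trace_adjugate_mul (A B : Matrix n n R) :
    ∑ k, det (A.updateCol k (Bᵀ k)) = trace (adjugate A * B) := by
  refine Finset.sum_congr rfl fun k _ => ?_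
  rw [← cramer_apply, cramer_eq_adjugate_mulVec]
  rfl

end Trace

section TensorPower

variable {d m : ℕ} {R : Type*} [CommRing R]

variable (d m R) in
def antisymmetrizer : Matrix (Fin m → Fin d) (Fin m → Fin d) R :=
  ∑ τ : Perm (Fin m), ((Perm.sign τ : ℤ) : R) • permMat d m R τ

theorem antisymmetrizer_mul_apply (B : Matrix (Fin m → Fin d) (Fin m → Fin d) R)
    (f g : Fin m → Fin d) :
    (antisymmetrizer d m R * B) f g = ∑ τ : Perm (Fin m), ((Perm.sign τ : ℤ) : R) * B (f ∘ τ) g := by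
  rw [antisymmetrizer, Matrix.sum_mul, Matrix.sum_apply]
  refine Finset.sum_congr rfl fun τ _ => ?_
  rw [smul_mul, Matrix.smul_apply, smul_eq_mul, mul_apply]
  simp [permMat]

theorem antisymmetrizer_mul_kron_apply (y : Fin m → Matrix (Fin d) (Fin d) R)
    (f g : Fin m → Fin d) :
    (antisymmetrizer d m R * kron d m R y) f g = det (of fun a i => y i (f a) (g i)) := by
  rw [antisymmetrizer_mul_apply, det_apply']
  rfl

theorem kron_one : kron d m R 1 = 1 := by
  ext f g
  simp only [kron, of_apply, Pi.one_apply, one_apply, Finset.prod_boole, Finset.mem_univ,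
    forall_true_left, funext_iff]

end TensorPower

theorem antisymmetrizer_mul_sum_kron_update_sub_trace {n : ℕ} {R : Type*} [CommRing R]
    (x : Matrix (Fin n) (Fin n) R) :
    antisymmetrizer n n R * (∑ k, kron n n R (Function.update 1 k x) - trace x • 1) = 0 := by
  ext f g
  have hcol : ∀ k, (of fun a i => Function.update (1 : Fin n → Matrix (Fin n) (Fin n) R) k x i
      (f a) (g i)) = ((1 : Matrix (Fin n) (Fin n) R).submatrix f g).updateCol k
        ((x.submatrix f g)ᵀ k) := by
    intro k
    ext a i
    by_cases hik : i = k
    · subst hik; simp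
    · simp [hik]
  have hone : (of fun a i => (1 : Fin n → Matrix (Fin n) (Fin n) R) i (f a) (g i))
      = (1 : Matrix (Fin n) (Fin n) R).submatrix f g := rfl
  rw [← kron_one, Matrix.mul_sub, Matrix.mul_sum, Matrix.mul_smul]
  simp only [Matrix.sub_apply, Matrix.sum_apply, Matrix.smul_apply, Matrix.zero_apply, smul_eq_mul,
    antisymmetrizer_mul_kron_apply, hcol, hone, sum_det_updateCol_eq_trace_adjugate_mul,
    trace_adjugate_one_submatrix_mul_submatrix, mul_comm, sub_self]

theorem c_one_three_general (F : Type*) [Field F] (x : Matrix (Fin 3) (Fin 3) F) :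
    (∑ τ : Equiv.Perm (Fin 3), ((Equiv.Perm.sign τ : ℤ) : F) • permMat 3 3 F τ) *
      (kron 3 3 F ![x, 1, 1] + kron 3 3 F ![1, x, 1] + kron 3 3 F ![1, 1, x]
        - Matrix.trace x • 1) = 0 := by
  have hupdate : ∀ k : Fin 3, Function.update (1 : Fin 3 → Matrix (Fin 3) (Fin 3) F) k x
      = ![if k = 0 then x else 1, if k = 1 then x else 1, if k = 2 then x else 1] := by
    intro k
    ext1 i
    fin_cases i <;> simp [Function.update_apply, eq_comm]
  have h := antisymmetrizer_mul_sum_kron_update_sub_trace x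
  simp only [Fin.sum_univ_three, hupdate] at h
  exact h

/-- **The identity `𝔠_{1,3}(x) = 0` for `3 × 3` matrices:**
`(∑_τ sgn(τ) • P_τ) * (x ⊗ 1 ⊗ 1 + 1 ⊗ x ⊗ 1 + 1 ⊗ 1 ⊗ x - tr(x)·1) = 0`. -/
theorem c_one_three (F : Type*) [Field F] [CharZero F] (x : Matrix (Fin 3) (Fin 3) F) :
    (∑ τ : Equiv.Perm (Fin 3), ((Equiv.Perm.sign τ : ℤ) : F) • permMat 3 3 F τ) *
      (kron 3 3 F ![x, 1, 1] + kron 3 3 F ![1, x, 1] + kron 3 3 F ![1, 1, x]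
        - Matrix.trace x • 1) = 0 :=
  c_one_three_general F x
end

section
/- Trace expression for characteristic polynomial coefficients: Let F be a field of characteristic zero, d ≥ 1, 0 ≤ r ≤ d, and x : Matrix (Fin d) (Fin d) F. Then (r! : F) * ((−1)^r * (Matrix.charpoly x).coeff (d − r)) = ∑_{σ ∈ Perm (Fin r)} sgn(σ) * Matrix.trace (P_{σ⁻¹} * K (fun _ : Fin r => x)); that is, r! · σ_r(x) equals the signed sum over the symmetric group S_r of the trace functions t_σ(x,…,x). -/
open Finset Function Nat

theorem trace_permMat_mul_kron {d m : ℕ} {R : Type*} [CommRing R] (σ : Equiv.Perm (Fin m))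
    (x : Fin m → Matrix (Fin d) (Fin d) R) :
    (permMat d m R σ * kron d m R x).trace =
      ∑ f : Fin m → Fin d, ∏ i, x i (f (σ i)) (f i) := by
  simp [permMat, kron, Matrix.trace, Matrix.mul_apply, ite_mul]

theorem sum_sign_mul_trace_permMat_inv_mul_kron (d m : ℕ) {R : Type*} [CommRing R]
    (x : Matrix (Fin d) (Fin d) R) :
    ∑ σ : Equiv.Perm (Fin m), ((Equiv.Perm.sign σ : ℤ) : R) *
        (permMat d m R σ⁻¹ * kron d m R fun _ => x).trace =
      ∑ f : Fin m → Fin d, (x.submatrix f f).det := by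
  simp_rw [trace_permMat_mul_kron, mul_sum]
  rw [sum_comm]
  refine sum_congr rfl fun f _ => ?_
  rw [Matrix.det_apply']
  exact sum_equiv (Equiv.inv _) (by simp) fun σ _ => by simp

section

variable {ι n R : Type*} [Fintype ι]

noncomputable def Equiv.ofInjectiveImageUniv [DecidableEq n] (f : ι → n) (hf : Injective f) :
    ι ≃ univ.image f :=
  Equiv.ofBijective (fun i => ⟨f i, mem_image_of_mem f (mem_univ i)⟩)
    ⟨fun _ _ h => hf (congrArg Subtype.val h), fun ⟨_, ha⟩ => by
      obtain ⟨i, -, rfl⟩ := mem_image.mp ha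
      exact ⟨i, rfl⟩⟩

theorem Finset.card_filter_injective_image_univ_eq [DecidableEq ι] [Fintype n] [DecidableEq n]
    {s : Finset n} (hs : #s = Fintype.card ι) :
    #{f : ι → n | Injective f ∧ univ.image f = s} = (Fintype.card ι)! := by
  have hfiber : ({f : ι → n | Injective f ∧ univ.image f = s} : Finset _) =
      univ.image fun e : ι ≃ s => Subtype.val ∘ e := by
    ext f
    simp only [mem_filter, mem_univ, true_and, mem_image]
    constructor
    · rintro ⟨hf, rfl⟩
      exact ⟨Equiv.ofInjectiveImageUniv f hf, rfl⟩
    · rintro ⟨e, rfl⟩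
      refine ⟨Subtype.val_injective.comp e.injective, ?_⟩
      ext a
      simp only [mem_image, mem_univ, true_and, comp_apply]
      exact ⟨fun ⟨i, hi⟩ => hi ▸ (e i).2, fun ha => ⟨e.symm ⟨a, ha⟩, by simp⟩⟩
  have hval : Injective fun e : ι ≃ s => Subtype.val ∘ e :=
    fun e e' h => Equiv.ext fun i => Subtype.ext (congrFun h i)
  rw [hfiber, card_image_of_injective _ hval, Finset.card_univ,
    Fintype.card_equiv (Fintype.equivOfCardEq (by simpa using hs.symm))]

namespace Matrix

variable [CommRing R]

theorem det_submatrix_self_eq_zero_of_not_injective [DecidableEq ι] (M : Matrix n n R)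
    {f : ι → n} (hf : ¬ Injective f) : (M.submatrix f f).det = 0 := by
  obtain ⟨i, j, hij, hne⟩ := not_injective_iff.mp hf
  exact det_zero_of_row_eq hne (by ext k; simp [hij])

theorem det_submatrix_self_of_injective [DecidableEq ι] [DecidableEq n] (M : Matrix n n R)
    {f : ι → n} (hf : Injective f) :
    (M.submatrix f f).det = (M.submatrix (Subtype.val : univ.image f → n) Subtype.val).det :=
  det_submatrix_equiv_self (Equiv.ofInjectiveImageUniv f hf) (M.submatrix Subtype.val Subtype.val)

theorem sum_det_submatrix_self [DecidableEq ι] [Fintype n] [DecidableEq n] (M : Matrix n n R) :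
    ∑ f : ι → n, (M.submatrix f f).det =
      (Fintype.card ι)! * ∑ s ∈ univ.powersetCard (Fintype.card ι),
        (M.submatrix (Subtype.val : s → n) Subtype.val).det := by
  have hmaps : ∀ f ∈ ({f : ι → n | Injective f} : Finset _),
      univ.image f ∈ univ.powersetCard (Fintype.card ι) := fun f hf => by
    rw [mem_powersetCard_univ, card_image_of_injective _ (mem_filter.mp hf).2, Finset.card_univ]
  calc ∑ f : ι → n, (M.submatrix f f).det
      = ∑ f : ι → n with Injective f, (M.submatrix f f).det :=
        (sum_filter_of_ne fun f _ h => not_not.mp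
          (mt (det_submatrix_self_eq_zero_of_not_injective M) h)).symm
    _ = ∑ s ∈ univ.powersetCard (Fintype.card ι),
          ∑ f : ι → n with Injective f ∧ univ.image f = s, (M.submatrix f f).det := by
        rw [← sum_fiberwise_of_maps_to hmaps]
        simp only [filter_filter]
    _ = _ := by
        rw [mul_sum]
        refine sum_congr rfl fun s hs => ?_
        rw [← card_filter_injective_image_univ_eq (mem_powersetCard_univ.mp hs), ← nsmul_eq_mul,
          ← sum_const]
        refine sum_congr rfl fun f hf => ?_
        obtain ⟨hinj, rfl⟩ := (mem_filter.mp hf).2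
        exact det_submatrix_self_of_injective M hinj

end Matrix

end

theorem factorial_sigma_eq_signed_trace_sum_general (F : Type*) [Field F]
    (d r : ℕ) (hr : r ≤ d) (x : Matrix (Fin d) (Fin d) F) :
    (r.factorial : F) * ((-1 : F) ^ r * (Matrix.charpoly x).coeff (d - r)) =
      ∑ σ : Equiv.Perm (Fin r), ((Equiv.Perm.sign σ : ℤ) : F) *
        Matrix.trace (permMat d r F σ⁻¹ * kron d r F (fun _ : Fin r => x)) := by
  have hcoeff := x.charpoly_coeff_eq_sum_minors r (by simpa using hr)
  rw [Fintype.card_fin] at hcoeff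
  rw [sum_sign_mul_trace_permMat_inv_mul_kron, Matrix.sum_det_submatrix_self, Fintype.card_fin,
    hcoeff, ← mul_assoc ((-1 : F) ^ r), ← mul_pow, neg_one_mul, neg_neg, one_pow, one_mul]

/-- **Trace expression for characteristic polynomial coefficients:**
`r! · σ_r(x) = ∑_{σ ∈ S_r} sgn(σ) · trace (P_{σ⁻¹} * K (x,…,x))`, where
`σ_r(x) = (-1)^r · coeff (d - r)` of the characteristic polynomial of `x`. -/
theorem factorial_sigma_eq_signed_trace_sum (F : Type*) [Field F] [CharZero F]
    (d r : ℕ) (hd : 1 ≤ d) (hr : r ≤ d) (x : Matrix (Fin d) (Fin d) F) :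
    (r.factorial : F) * ((-1 : F) ^ r * (Matrix.charpoly x).coeff (d - r)) =
      ∑ σ : Equiv.Perm (Fin r), ((Equiv.Perm.sign σ : ℤ) : F) *
        Matrix.trace (permMat d r F σ⁻¹ * kron d r F (fun _ : Fin r => x)) :=
  factorial_sigma_eq_signed_trace_sum_general F d r hr x
end
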